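/- arXiv:0801.2409 — 4 statements merged into one kernel-verified Lean document; each statement's English description precedes it below -/
import Mathlib

section
/- Let g : Λ → Λ be a finite Markov system induced by (Y, {Y_j}_{j=1}^l, g) with distortion constant C ≥ 1. Then liminf_{n→∞} (1/n) log Σ_{J ∈ W_n} m(Y_J) ≥ log Σ_{p=1}^l m(Y_p) − log m(Y) − log C, where W_n denotes the set of words of length n in the alphabet {1,…,l} and Y_J the corresponding cylinder set. -/
/-!
Pulling back a cylinder `Y_J` through the branch `g : Y_p → Y` and comparing the Jacobian at
two points of `Y_p` (distortion at word length one) gives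
`m(Y_J) · m(Y_p) ≤ C · m(Y) · m(Y_{pJ})`. Summed over `p` and `J`, this says
`(Σ_p m(Y_p)) · S_n ≤ C · m(Y) · S_{n+1}` for `S_n = Σ_{|J| = n} m(Y_J)`, so
`S_n ≥ m(Y) · (Σ_p m(Y_p) / (C · m(Y)))ⁿ`, and the bound follows on taking `(1/n) log`.
-/

open MeasureTheory Real Filter

/-- The cylinder set `Y_{a_0⋯a_{n−1}} = Y_{a_0} ∩ g^{−1}Y_{a_1} ∩ ⋯ ∩ g^{−(n−1)}Y_{a_{n−1}}`
for a word `J` of length `n`. -/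
def cylinder {Y : Type*} (g : Y → Y) {l : ℕ} (Yj : Fin l → Set Y) {n : ℕ}
    (J : Fin n → Fin l) : Set Y :=
  {x | ∀ i : Fin n, g^[(i : ℕ)] x ∈ Yj (J i)}

open Topology

section Cylinder

variable {Y : Type*} (g : Y → Y) {l : ℕ} (Yj : Fin l → Set Y)

lemma cylinder_zero (J : Fin 0 → Fin l) : cylinder g Yj J = Set.univ := by
  ext x; simp [_root_.cylinder]

lemma cylinder_const_one (p : Fin l) : cylinder g Yj (fun _ : Fin 1 => p) = Yj p := by
  ext x; simp [_root_.cylinder]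

lemma cylinder_cons {n : ℕ} (p : Fin l) (J : Fin n → Fin l) :
    cylinder g Yj (Fin.cons p J) = Yj p ∩ g ⁻¹' cylinder g Yj J := by
  ext x
  simp only [_root_.cylinder, Set.mem_ofPred_eq, Set.mem_inter_iff, Set.mem_preimage,
    Fin.forall_fin_succ, Fin.cons_zero, Fin.cons_succ, Fin.val_zero,
    Function.iterate_zero, id_eq, Fin.val_succ, Function.iterate_succ_apply]

lemma cylinder_cons_subset {n : ℕ} (p : Fin l) (J : Fin n → Fin l) :
    cylinder g Yj (Fin.cons p J) ⊆ Yj p := by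
  rw [cylinder_cons]; exact Set.inter_subset_left

lemma image_cylinder_cons {n : ℕ} {p : Fin l} (hsurj : g '' Yj p = Set.univ)
    (J : Fin n → Fin l) : g '' cylinder g Yj (Fin.cons p J) = cylinder g Yj J := by
  rw [cylinder_cons, Set.image_inter_preimage, hsurj, Set.univ_inter]

lemma measurableSet_cylinder [MeasurableSpace Y] (hg : Measurable g)
    (hmeas : ∀ j, MeasurableSet (Yj j)) {n : ℕ} (J : Fin n → Fin l) :
    MeasurableSet (cylinder g Yj J) := by
  have : cylinder g Yj J = ⋂ i : Fin n, g^[(i : ℕ)] ⁻¹' Yj (J i) := by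
    ext x; simp [_root_.cylinder]
  rw [this]
  exact .iInter fun i => hg.iterate _ (hmeas _)

lemma sum_cylinder_succ {M : Type*} [AddCommMonoid M] (f : Set Y → M) (n : ℕ) :
    ∑ K : Fin (n + 1) → Fin l, f (cylinder g Yj K) =
      ∑ p : Fin l, ∑ J : Fin n → Fin l, f (cylinder g Yj (Fin.cons p J)) := by
  rw [← Fintype.sum_prod_type']
  exact (Fintype.sum_equiv (Fin.consEquiv fun _ => Fin l) _ _ fun _ => rfl).symm

lemma mul_sum_cylinder_le (ν : Set Y → ℝ) {K : ℝ} {n : ℕ}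
    (h : ∀ (J : Fin n → Fin l) (p : Fin l),
      ν (cylinder g Yj J) * ν (Yj p) ≤ K * ν (cylinder g Yj (Fin.cons p J))) :
    (∑ p, ν (Yj p)) * ∑ J : Fin n → Fin l, ν (cylinder g Yj J) ≤
      K * ∑ J : Fin (n + 1) → Fin l, ν (cylinder g Yj J) := by
  rw [sum_cylinder_succ, Finset.sum_mul_sum, Finset.mul_sum]
  refine Finset.sum_le_sum fun p _ => ?_
  rw [Finset.mul_sum]
  exact Finset.sum_le_sum fun J _ => mul_comm (ν (Yj p)) _ ▸ h J p

lemma sum_measureReal_cylinder_le [MeasurableSpace Y] (μ : Measure Y) [IsFiniteMeasure μ]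
    (n : ℕ) : ∑ J : Fin n → Fin l, μ.real (cylinder g Yj J) ≤ (l : ℝ) ^ n * μ.real Set.univ :=
  calc ∑ J : Fin n → Fin l, μ.real (cylinder g Yj J) ≤ ∑ _J : Fin n → Fin l, μ.real Set.univ :=
        Finset.sum_le_sum fun _ _ => measureReal_mono (Set.subset_univ _)
    _ = (l : ℝ) ^ n * μ.real Set.univ := by simp

end Cylinder

section Distortion

variable {α : Type*} [MeasurableSpace α] {μ : Measure α} {f : α → ℝ} {s t : Set α} {C : ℝ}

lemma integrableOn_of_le_mul (hf : AEStronglyMeasurable f μ) (hs : MeasurableSet s)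
    (hμs : μ s ≠ ⊤) (hf0 : ∀ x ∈ s, 0 ≤ f x) (hdist : ∀ x ∈ s, ∀ y ∈ s, f x ≤ C * f y) :
    IntegrableOn f s μ := by
  rcases s.eq_empty_or_nonempty with rfl | ⟨y, hy⟩
  · exact integrableOn_empty
  refine Measure.integrableOn_of_bounded hμs hf (M := C * f y) ?_
  filter_upwards [ae_restrict_mem hs] with x hx
  rw [Real.norm_of_nonneg (hf0 x hx)]
  exact hdist x hx y hy

lemma setIntegral_mul_measureReal_le [IsFiniteMeasure μ] (hs : MeasurableSet s)
    (ht : MeasurableSet t) (hts : t ⊆ s) (hf : IntegrableOn f s μ)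
    (hdist : ∀ x ∈ s, ∀ y ∈ s, f x ≤ C * f y) :
    (∫ x in t, f x ∂μ) * μ.real s ≤ C * μ.real t * ∫ y in s, f y ∂μ := by
  have hpoint : ∀ y ∈ s, ∫ x in t, f x ∂μ ≤ C * μ.real t * f y := fun y hy =>
    calc ∫ x in t, f x ∂μ ≤ ∫ _ in t, C * f y ∂μ :=
          setIntegral_mono_on (hf.mono_set hts) integrableOn_const ht
            fun x hx => hdist x (hts hx) y hy
      _ = C * μ.real t * f y := by rw [setIntegral_const, smul_eq_mul]; ring
  calc (∫ x in t, f x ∂μ) * μ.real s = ∫ _ in s, ∫ x in t, f x ∂μ ∂μ := by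
        rw [setIntegral_const, smul_eq_mul, mul_comm]
    _ ≤ ∫ y in s, C * μ.real t * f y ∂μ :=
        setIntegral_mono_on integrableOn_const (hf.const_mul _) hs hpoint
    _ = C * μ.real t * ∫ y in s, f y ∂μ := integral_const_mul _ _

end Distortion

lemma measureReal_image_mul_le {Y : Type*} [MeasurableSpace Y] {m : Measure Y}
    [IsFiniteMeasure m] {g : Y → Y} {A T : Set Y} {Jac : Y → ℝ} {C : ℝ}
    (hA : MeasurableSet A) (hT : MeasurableSet T) (hTA : T ⊆ A) (hsurj : g '' A = Set.univ)
    (hJ0 : ∀ x ∈ A, 0 ≤ Jac x) (hJmeas : Measurable Jac)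
    (hCOV : ∀ S ⊆ A, MeasurableSet S → m (g '' S) = ENNReal.ofReal (∫ x in S, Jac x ∂m))
    (hdist : ∀ x ∈ A, ∀ y ∈ A, Jac x ≤ C * Jac y) :
    m.real (g '' T) * m.real A ≤ C * m.real Set.univ * m.real T := by
  have hCOV' : ∀ S ⊆ A, MeasurableSet S → m.real (g '' S) = ∫ x in S, Jac x ∂m :=
    fun S hSA hS => by
      rw [measureReal_def, hCOV S hSA hS,
        ENNReal.toReal_ofReal (setIntegral_nonneg hS fun x hx => hJ0 x (hSA hx))]
  have hJint : IntegrableOn Jac A m :=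
    integrableOn_of_le_mul hJmeas.aestronglyMeasurable hA (measure_ne_top m A) hJ0 hdist
  calc m.real (g '' T) * m.real A = (∫ x in T, Jac x ∂m) * m.real A := by
        rw [hCOV' T hTA hT]
    _ ≤ C * m.real T * ∫ x in A, Jac x ∂m :=
        setIntegral_mul_measureReal_le hA hT hTA hJint hdist
    _ = C * m.real Set.univ * m.real T := by
        rw [← hCOV' A subset_rfl hA, hsurj]; ring

lemma pow_mul_le_pow_mul_of_mul_le_mul {a b : ℝ} {s : ℕ → ℝ} (ha : 0 ≤ a) (hb : 0 ≤ b)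
    (h : ∀ n, a * s n ≤ b * s (n + 1)) (n : ℕ) : a ^ n * s 0 ≤ b ^ n * s n := by
  induction n with
  | zero => simp
  | succ n ih =>
    calc a ^ (n + 1) * s 0 = a * (a ^ n * s 0) := by ring
      _ ≤ a * (b ^ n * s n) := mul_le_mul_of_nonneg_left ih ha
      _ = b ^ n * (a * s n) := by ring
      _ ≤ b ^ n * (b * s (n + 1)) := mul_le_mul_of_nonneg_left (h n) (by positivity)
      _ = b ^ (n + 1) * s (n + 1) := by ring

lemma log_sub_log_le_liminf_log_div {s : ℕ → ℝ} {a b c D K : ℝ} (ha : 0 < a) (hb : 0 < b)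
    (hc : 0 < c) (hK : 0 < K) (hlow : ∀ n, a ^ n * c ≤ b ^ n * s n)
    (hup : ∀ n, s n ≤ K ^ n * D) :
    log a - log b ≤ liminf (fun n : ℕ => log (s n) / n) atTop := by
  have hs : ∀ n, 0 < s n := fun n =>
    pos_of_mul_pos_right ((by positivity : 0 < a ^ n * c).trans_le (hlow n)) (by positivity)
  have hD : 0 < D := by simpa using (hs 0).trans_le (hup 0)
  have hlower : ∀ n : ℕ, 1 ≤ n → log a - log b + log c / n ≤ log (s n) / n := by
    intro n hn
    have hn' : (0 : ℝ) < n := by exact_mod_cast hn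
    have := log_le_log (by positivity) (hlow n)
    rw [log_mul (by positivity) hc.ne', log_mul (by positivity) (hs n).ne', log_pow,
      log_pow] at this
    rw [le_div_iff₀ hn']
    field_simp
    linarith
  have hupper : ∀ n : ℕ, 1 ≤ n → log (s n) / n ≤ log K + log D / n := by
    intro n hn
    have hn' : (0 : ℝ) < n := by exact_mod_cast hn
    have := log_le_log (hs n) (hup n)
    rw [log_mul (by positivity) hD.ne', log_pow] at this
    rw [div_le_iff₀ hn']
    field_simp
    linarith
  have hlowT : Tendsto (fun n : ℕ => log a - log b + log c / n) atTop (𝓝 (log a - log b)) := by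
    simpa using tendsto_const_nhds.add (tendsto_const_div_atTop_nhds_zero_nat (log c))
  have hupT : Tendsto (fun n : ℕ => log K + log D / n) atTop (𝓝 (log K)) := by
    simpa using tendsto_const_nhds.add (tendsto_const_div_atTop_nhds_zero_nat (log D))
  have hcobdd : IsCoboundedUnder (· ≥ ·) atTop (fun n : ℕ => log (s n) / n) :=
    (hupT.isBoundedUnder_le.mono_le (eventually_atTop.2 ⟨1, hupper⟩)).isCoboundedUnder_flip
  rw [← hlowT.liminf_eq]
  exact liminf_le_liminf (eventually_atTop.2 ⟨1, hlower⟩) hlowT.isBoundedUnder_ge hcobdd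

theorem stmt2_general {Y : Type*} [MeasurableSpace Y] (m : Measure Y) [IsFiniteMeasure m]
    (l : ℕ) (hl : 1 ≤ l) (Yj : Fin l → Set Y)
    (hmeas : ∀ j, MeasurableSet (Yj j))
    (hpos : ∀ j, 0 < m (Yj j))
    (g : Y → Y) (hg : Measurable g)
    (hsurj : ∀ j, g '' Yj j = Set.univ)
    (Jac : Y → ℝ) (hJpos : ∀ x, 0 < Jac x) (hJmeas : Measurable Jac)
    (hCOV : ∀ j, ∀ S : Set Y, S ⊆ Yj j → MeasurableSet S →
      m (g '' S) = ENNReal.ofReal (∫ x in S, Jac x ∂m))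
    (C : ℝ) (hC : 1 ≤ C)
    (hdist : ∀ n : ℕ, 1 ≤ n → ∀ J : Fin n → Fin l,
      ∀ x ∈ cylinder g Yj J, ∀ y ∈ cylinder g Yj J,
        (∏ i : Fin n, Jac (g^[(i : ℕ)] x)) ≤ C * ∏ i : Fin n, Jac (g^[(i : ℕ)] y)) :
    Real.log (∑ p : Fin l, (m (Yj p)).toReal) - Real.log (m Set.univ).toReal -
        Real.log C ≤
      liminf (fun n : ℕ =>
        Real.log (∑ J : Fin n → Fin l, (m (cylinder g Yj J)).toReal) / n) atTop := by
  have hdist₁ : ∀ p, ∀ x ∈ Yj p, ∀ y ∈ Yj p, Jac x ≤ C * Jac y := fun p x hx y hy => by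
    simpa using hdist 1 le_rfl (fun _ => p) x (by rwa [cylinder_const_one])
      y (by rwa [cylinder_const_one])
  have hbranch : ∀ n (J : Fin n → Fin l) p, m.real (cylinder g Yj J) * m.real (Yj p) ≤
      C * m.real Set.univ * m.real (cylinder g Yj (Fin.cons p J)) := fun n J p => by
    rw [← image_cylinder_cons g Yj (hsurj p)]
    exact measureReal_image_mul_le (hmeas p) (measurableSet_cylinder g Yj hg hmeas _)
      (cylinder_cons_subset g Yj p J) (hsurj p) (fun x _ => (hJpos x).le) hJmeas (hCOV p)
      (hdist₁ p)
  set S : ℕ → ℝ := fun n => ∑ J : Fin n → Fin l, m.real (cylinder g Yj J)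
  have hS₀ : S 0 = m.real Set.univ := by simp [S, cylinder_zero]
  have hYpos : ∀ p, 0 < m.real (Yj p) := fun p =>
    ENNReal.toReal_pos (hpos p).ne' (measure_ne_top m _)
  have hA : 0 < ∑ p, m.real (Yj p) := Finset.sum_pos (fun p _ => hYpos p) ⟨⟨0, hl⟩, by simp⟩
  have hM : 0 < m.real Set.univ :=
    (hYpos ⟨0, hl⟩).trans_le (measureReal_mono (Set.subset_univ _))
  have hC₀ : 0 < C := one_pos.trans_le hC
  have hlow := pow_mul_le_pow_mul_of_mul_le_mul (s := S) hA.le (by positivity)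
    (fun n => mul_sum_cylinder_le g Yj m.real (hbranch n))
  rw [hS₀] at hlow
  have := log_sub_log_le_liminf_log_div hA (by positivity) hM (by exact_mod_cast hl) hlow
    (sum_measureReal_cylinder_le g Yj m)
  rwa [log_mul hC₀.ne' hM.ne', sub_add_eq_sub_sub, sub_right_comm] at this

/-- For a finite Markov system `(Y, {Y_j}_{j=1}^l, g)` with distortion
constant `C ≥ 1`,
`liminf_n (1/n) log Σ_{J ∈ W_n} m(Y_J) ≥ log Σ_p m(Y_p) − log m(Y) − log C`. -/
theorem stmt2 {Y : Type*} [MeasurableSpace Y] (m : Measure Y) [IsFiniteMeasure m]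
    (l : ℕ) (hl : 1 ≤ l) (Yj : Fin l → Set Y)
    (hmeas : ∀ j, MeasurableSet (Yj j))
    (hdisj : Pairwise (fun i j => Disjoint (Yj i) (Yj j)))
    (hpos : ∀ j, 0 < m (Yj j))
    (g : Y → Y) (hg : Measurable g)
    (hinj : ∀ j, Set.InjOn g (Yj j)) (hsurj : ∀ j, g '' Yj j = Set.univ)
    (Jac : Y → ℝ) (hJpos : ∀ x, 0 < Jac x) (hJmeas : Measurable Jac)
    (hCOV : ∀ j, ∀ S : Set Y, S ⊆ Yj j → MeasurableSet S →
      m (g '' S) = ENNReal.ofReal (∫ x in S, Jac x ∂m))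
    (C : ℝ) (hC : 1 ≤ C)
    (hdist : ∀ n : ℕ, 1 ≤ n → ∀ J : Fin n → Fin l,
      ∀ x ∈ cylinder g Yj J, ∀ y ∈ cylinder g Yj J,
        (∏ i : Fin n, Jac (g^[(i : ℕ)] x)) ≤ C * ∏ i : Fin n, Jac (g^[(i : ℕ)] y)) :
    Real.log (∑ p : Fin l, (m (Yj p)).toReal) - Real.log (m Set.univ).toReal -
        Real.log C ≤
      liminf (fun n : ℕ =>
        Real.log (∑ J : Fin n → Fin l, (m (cylinder g Yj J)).toReal) / n) atTop :=
  stmt2_general m l hl Yj hmeas hpos g hg hsurj Jac hJpos hJmeas hCOV C hC hdist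
end

section
/- Let a_k = exp(−8^{l+1}) for 8^l ≤ k < 8^{l+1} (l ≥ 0) and a_0 = 1, and let T be the tower map on Z = ⊔_k (0,a_k] × {k} with the linear return maps g_k(x) = (x − a_{k+1})/(a_k − a_{k+1}) on (a_{k+1}, a_k]. Define ψ(x,k) = 1 if 8^l ≤ k < 2·8^l for some l ≥ 0, and ψ(x,k) = 0 otherwise. Then for every integer l ≥ 1, the set {x ∈ (0,1] : (1/8^l) S_{8^l} ψ(x,0) > 7/16} is empty; consequently liminf_{n→∞} (1/n) log m({x : (1/n) S_n ψ(x,0) > 7/16}) = −∞. -/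
/-!
Starting from `(x, 0)` with `x ∈ (0, 1]`, the orbit climbs the tower until the first level `k` with
`a_k < x`; by the shape of `a` this excursion has length exactly `8^j` for some `j`, and it returns to
level `0`. Along an excursion of length `8^j` the observable is `1` on exactly `(8^j - 1)/7` levels,
so complete excursions contribute less than a seventh of their length, while the final incomplete
one contributes at most the number `G(n)` of good levels below `n`. Hence `7 S_n ≤ n + 7 G(n)`, and
for `n = 8^l` this gives `S_n / n < 2/7 < 7/16`, so the level sets are empty along `8^l` and
`log m(⋯) = -∞` infinitely often.
-/

open scoped Classical
open MeasureTheory Real Filter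

/-- Birkhoff sum along `T`. -/
noncomputable def birkhoffSum' {Z : Type*} (T : Z → Z) (ψ : Z → ℝ) (n : ℕ) (z : Z) : ℝ :=
  ∑ i ∈ Finset.range n, ψ (T^[i] z)

open Finset

theorem birkhoffSum'_eq_birkhoffSum {Z : Type*} (T : Z → Z) (ψ : Z → ℝ) :
    birkhoffSum' T ψ = birkhoffSum T ψ :=
  rfl

def IsGoodLevel (k : ℕ) : Prop := ∃ l : ℕ, 8 ^ l ≤ k ∧ k < 2 * 8 ^ l

noncomputable def goodCount (n : ℕ) : ℕ := ∑ k ∈ range n, if IsGoodLevel k then 1 else 0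

theorem isGoodLevel_iff {j k : ℕ} (h₁ : 8 ^ j ≤ k) (h₂ : k < 8 ^ (j + 1)) :
    IsGoodLevel k ↔ k < 2 * 8 ^ j := by
  have hlog : ∀ {i}, 8 ^ i ≤ k → k < 8 ^ (i + 1) → i = Nat.log 8 k := fun h h' =>
    (Nat.log_eq_of_pow_le_of_lt_pow h h').symm
  refine ⟨fun ⟨l, hl₁, hl₂⟩ => ?_, fun h => ⟨j, h₁, h⟩⟩
  rwa [hlog h₁ h₂, ← hlog hl₁ (by rw [pow_succ]; omega)]

theorem goodCount_mono : Monotone goodCount := fun _ _ h =>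
  sum_le_sum_of_subset (range_subset_range.2 h)

theorem goodCount_pow_succ (j : ℕ) : goodCount (8 ^ (j + 1)) = goodCount (8 ^ j) + 8 ^ j := by
  have hpow : 8 ^ (j + 1) = 8 * 8 ^ j := by ring
  rw [goodCount, ← sum_range_add_sum_Ico _ (by omega : 8 ^ j ≤ 8 ^ (j + 1)), goodCount,
    ← sum_Ico_consecutive _ (by omega : 8 ^ j ≤ 2 * 8 ^ j) (by omega : 2 * 8 ^ j ≤ 8 ^ (j + 1))]
  have hlow : ∑ k ∈ Ico (8 ^ j) (2 * 8 ^ j), (if IsGoodLevel k then 1 else 0) = 8 ^ j := by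
    rw [sum_congr rfl fun k hk => if_pos <| by
      obtain ⟨hk₁, hk₂⟩ := mem_Ico.1 hk
      exact (isGoodLevel_iff hk₁ (by omega)).2 hk₂]
    simp only [sum_const, Nat.card_Ico, smul_eq_mul, mul_one]
    omega
  have hhigh : ∑ k ∈ Ico (2 * 8 ^ j) (8 ^ (j + 1)), (if IsGoodLevel k then 1 else 0) = 0 :=
    sum_eq_zero fun k hk => by
      obtain ⟨hk₁, hk₂⟩ := mem_Ico.1 hk
      exact if_neg fun hg => hk₁.not_gt ((isGoodLevel_iff (by omega) hk₂).1 hg)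
  rw [hlow, hhigh, add_zero]

theorem seven_mul_goodCount_pow_add_one (j : ℕ) : 7 * goodCount (8 ^ j) + 1 = 8 ^ j := by
  induction j with
  | zero =>
    have h0 : ¬IsGoodLevel 0 := fun ⟨l, hl, _⟩ => (Nat.one_le_pow l 8 (by norm_num)).not_gt (by omega)
    simp [goodCount, h0]
  | succ j ih => rw [goodCount_pow_succ, pow_succ]; omega

theorem exists_exp_neg_eight_pow_lt {x : ℝ} (hx : 0 < x) :
    ∃ j : ℕ, exp (-(8 : ℝ) ^ (j + 1)) < x := by
  obtain ⟨j, hj⟩ := pow_unbounded_of_one_lt (-log x) (by norm_num : (1 : ℝ) < 8)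
  refine ⟨j, (lt_log_iff_exp_lt hx).1 ?_⟩
  have : (8 : ℝ) ^ j ≤ 8 ^ (j + 1) := pow_le_pow_right₀ (by norm_num) j.le_succ
  linarith

section Tower

variable {a : ℕ → ℝ} {T : ℝ × ℕ → ℝ × ℕ} {ψ : ℝ × ℕ → ℝ}
  (hT : ∀ x : ℝ, ∀ k : ℕ, T (x, k) =
    if x ≤ a (k + 1) then (x, k + 1) else ((x - a (k + 1)) / (a k - a (k + 1)), 0))
  (ha0 : a 0 = 1)
  (ha : ∀ k l : ℕ, 8 ^ l ≤ k → k < 8 ^ (l + 1) → a k = Real.exp (-(8 : ℝ) ^ (l + 1)))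
  (hψ : ∀ x : ℝ, ∀ k : ℕ, ψ (x, k) = if ∃ l : ℕ, 8 ^ l ≤ k ∧ k < 2 * 8 ^ l then 1 else 0)

include hT in
theorem iterate_tower_eq_of_le {x : ℝ} {n : ℕ} (h : ∀ k < n, x ≤ a (k + 1)) :
    T^[n] (x, 0) = (x, n) := by
  induction n with
  | zero => rfl
  | succ n ih =>
    rw [Function.iterate_succ_apply', ih fun k hk => h k (by omega), hT, if_pos (h n n.lt_succ_self)]

include hT in
theorem exists_iterate_tower_eq_zero {x : ℝ} {n : ℕ} (hle : ∀ k ≤ n, x ≤ a k)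
    (hlt : a (n + 1) < x) : ∃ y ∈ Set.Ioc (0 : ℝ) 1, T^[n + 1] (x, 0) = (y, 0) := by
  have hxn := hle n le_rfl
  rw [Function.iterate_succ_apply', iterate_tower_eq_of_le hT fun k hk => hle (k + 1) hk, hT,
    if_neg hlt.not_ge]
  exact ⟨_, ⟨div_pos (by linarith) (by linarith), (div_le_one (by linarith)).2 (by linarith)⟩, rfl⟩

include ha in
theorem eq_exp_neg_eight_pow_log {k : ℕ} (hk : k ≠ 0) : a k = exp (-(8 : ℝ) ^ (Nat.log 8 k + 1)) :=
  ha k _ (Nat.pow_log_le_self 8 hk) (Nat.lt_pow_succ_log_self (by norm_num) k)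

include hT ha0 ha in
/-- The excursion starting at `(x, 0)` has length `8^j` for the least `j` with `e^{-8^{j+1}} < x`. -/
theorem exists_excursion {x : ℝ} (hx : x ∈ Set.Ioc (0 : ℝ) 1) :
    ∃ j : ℕ, (∀ i < 8 ^ j, T^[i] (x, 0) = (x, i)) ∧
      ∃ y ∈ Set.Ioc (0 : ℝ) 1, T^[8 ^ j] (x, 0) = (y, 0) := by
  have hex := exists_exp_neg_eight_pow_lt hx.1
  set j := Nat.find hex
  have hle : ∀ k < 8 ^ j, x ≤ a k := by
    intro k hk
    rcases eq_or_ne k 0 with rfl | hk0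
    · exact ha0 ▸ hx.2
    · rw [eq_exp_neg_eight_pow_log ha hk0]
      exact not_lt.1 (Nat.find_min hex ((Nat.log_lt_iff_lt_pow (by norm_num) hk0).2 hk))
  have hlt : a (8 ^ j) < x := by
    rw [ha (8 ^ j) j le_rfl (Nat.pow_lt_pow_right (by norm_num) j.lt_succ_self)]
    exact Nat.find_spec hex
  obtain ⟨n, hn⟩ := Nat.exists_eq_add_one_of_ne_zero (pow_ne_zero j (by norm_num : 8 ≠ 0))
  refine ⟨j, fun i hi => iterate_tower_eq_of_le hT fun k hk => hle (k + 1) (by omega), ?_⟩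
  rw [hn] at hlt hle ⊢
  exact exists_iterate_tower_eq_zero hT (fun k hk => hle k (by omega)) hlt

include hψ in
theorem birkhoffSum_eq_goodCount {x : ℝ} {n : ℕ} (hiter : ∀ i < n, T^[i] (x, 0) = (x, i)) :
    birkhoffSum T ψ n (x, 0) = goodCount n := by
  rw [birkhoffSum, goodCount, Nat.cast_sum]
  refine sum_congr rfl fun i hi => ?_
  rw [hiter i (mem_range.1 hi), hψ, Nat.cast_ite, Nat.cast_one, Nat.cast_zero]
  rfl

include hT ha0 ha hψ in
theorem seven_mul_birkhoffSum_le (n : ℕ) {x : ℝ} (hx : x ∈ Set.Ioc (0 : ℝ) 1) :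
    7 * birkhoffSum T ψ n (x, 0) ≤ n + 7 * goodCount n := by
  induction n using Nat.strong_induction_on generalizing x with
  | _ n ih =>
    obtain ⟨j, hiter, y, hy, hret⟩ := exists_excursion hT ha0 ha hx
    rcases le_or_gt n (8 ^ j) with hn | hn
    · rw [birkhoffSum_eq_goodCount hψ fun i hi => hiter i (by omega)]
      linarith [(n.cast_nonneg : (0 : ℝ) ≤ n)]
    · obtain ⟨m, rfl⟩ := Nat.exists_eq_add_of_le hn.le
      have hm := ih m (by have := Nat.one_le_pow j 8 (by norm_num); omega) hy
      have hexc : (7 * goodCount (8 ^ j) + 1 : ℝ) = 8 ^ j := by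
        exact_mod_cast seven_mul_goodCount_pow_add_one j
      have hmono : (goodCount m : ℝ) ≤ goodCount (8 ^ j + m) := by
        exact_mod_cast goodCount_mono (Nat.le_add_left m _)
      rw [birkhoffSum_add, hret, birkhoffSum_eq_goodCount hψ hiter]
      push_cast
      linarith

include hT ha0 ha hψ in
theorem birkhoffSum_pow_div_lt (l : ℕ) {x : ℝ} (hx : x ∈ Set.Ioc (0 : ℝ) 1) :
    birkhoffSum T ψ (8 ^ l) (x, 0) / 8 ^ l < 2 / 7 := by
  have h := seven_mul_birkhoffSum_le hT ha0 ha hψ (8 ^ l) hx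
  have hexc : (7 * goodCount (8 ^ l) + 1 : ℝ) = 8 ^ l := by
    exact_mod_cast seven_mul_goodCount_pow_add_one l
  push_cast at h
  rw [div_lt_iff₀ (by positivity)]
  linarith

end Tower

theorem liminf_log_measure_div_eq_bot {α : Type*} [MeasurableSpace α] (μ : Measure α)
    (s : ℕ → Set α) (h : ∃ᶠ n in atTop, μ (s n) = 0) :
    liminf (fun n : ℕ => ENNReal.log (μ (s n)) / (n : EReal)) atTop = ⊥ := by
  refine le_bot_iff.1 (liminf_le_of_frequently_le' ?_)
  refine (h.and_eventually (eventually_gt_atTop 0)).mono fun n ⟨hn, hpos⟩ => ?_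
  rw [hn, ENNReal.log_zero, EReal.bot_div_of_pos_ne_top (by exact_mod_cast hpos)
    (EReal.natCast_ne_top n)]

/-- For the tower over `X = (0,1]` built from the sequence
`a_k = exp(−8^{l+1})` for `8^l ≤ k < 8^{l+1}` (`l ≥ 0`), `a_0 = 1`, with tower map
`T(x,k) = (x, k+1)` for `x ∈ (0, a_{k+1}]` and `T(x,k) = ((x−a_{k+1})/(a_k−a_{k+1}), 0)`
for `x ∈ (a_{k+1}, a_k]`, and the observable `ψ(x,k) = 1` iff `8^l ≤ k < 2·8^l` for some
`l ≥ 0`, the set `{x ∈ (0,1] : (1/8^l) S_{8^l}ψ(x,0) > 7/16}` is empty for every `l ≥ 1`;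
consequently `liminf (1/n) log m({x : (1/n)S_nψ(x,0) > 7/16}) = −∞`. -/
theorem stmt5 (a : ℕ → ℝ) (ha0 : a 0 = 1)
    (ha : ∀ k l : ℕ, 8 ^ l ≤ k → k < 8 ^ (l + 1) → a k = Real.exp (-(8 : ℝ) ^ (l + 1)))
    (T : ℝ × ℕ → ℝ × ℕ)
    (hT : ∀ x : ℝ, ∀ k : ℕ, T (x, k) =
      if x ≤ a (k + 1) then (x, k + 1) else ((x - a (k + 1)) / (a k - a (k + 1)), 0))
    (ψ : ℝ × ℕ → ℝ)
    (hψ : ∀ x : ℝ, ∀ k : ℕ, ψ (x, k) =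
      if ∃ l : ℕ, 8 ^ l ≤ k ∧ k < 2 * 8 ^ l then 1 else 0) :
    (∀ l : ℕ, 1 ≤ l →
      {x : ℝ | x ∈ Set.Ioc (0 : ℝ) 1 ∧
        birkhoffSum' T ψ (8 ^ l) (x, 0) / (8 ^ l : ℝ) > 7 / 16} = ∅) ∧
    liminf (fun n : ℕ =>
      ENNReal.log (volume {x : ℝ | x ∈ Set.Ioc (0 : ℝ) 1 ∧
        birkhoffSum' T ψ n (x, 0) / (n : ℝ) > 7 / 16}) / (n : EReal)) atTop = ⊥ := by
  have hempty : ∀ l : ℕ, {x : ℝ | x ∈ Set.Ioc (0 : ℝ) 1 ∧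
      birkhoffSum' T ψ (8 ^ l) (x, 0) / (8 ^ l : ℝ) > 7 / 16} = ∅ := fun l =>
    Set.eq_empty_iff_forall_notMem.2 fun x ⟨hx, hgt⟩ => by
      have := birkhoffSum_pow_div_lt hT ha0 ha hψ l hx
      rw [birkhoffSum'_eq_birkhoffSum] at hgt
      linarith
  refine ⟨fun l _ => hempty l, liminf_log_measure_div_eq_bot volume _ ?_⟩
  refine (tendsto_pow_atTop_atTop_of_one_lt (by norm_num : 1 < 8)).frequently
    (Frequently.of_forall fun l => ?_)
  rw [Nat.cast_pow, Nat.cast_ofNat, hempty l, measure_empty]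
end

section
/- Let f : I → I be a C² map of a compact interval satisfying the tower assumptions of the paper, and let μ ∈ M_f be ergodic and hyperbolic with Lyapunov exponent λ_μ(f) = ∫ log|f′| dμ > 0. Suppose for ε > 0 there exist integers k, l ≥ 1 with (log l)/k ≥ h_μ(f) − ε and pairwise disjoint compact intervals L_1,…,L_l contained in an interval L with f^k(L_i) = L, f^k injective on each L_i, and |(1/k)log|(f^k)′(x)| − λ_μ(f)| ≤ ε, (1/k)S_kφ(x) ≥ ∫φ dμ − ε > a for all x ∈ ⊔_i L_i. Then liminf_{n→∞} (1/n) log m({x ∈ I : (1/n)S_nφ(x) > a}) ≥ h_μ(f) − ∫ log|f′| dμ − 2ε. -/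
open MeasureTheory Real Filter
open scoped ENNReal NNReal

/-- Entropy of a countable measurable partition (encoded by an index function). -/
noncomputable def partitionEntropy {Z : Type*} [MeasurableSpace Z] (μ : Measure Z)
    {ι : Type*} (p : Z → ι) : ℝ :=
  ∑' i : ι, Real.negMulLog (μ (p ⁻¹' {i})).toReal

/-- The Kolmogorov–Sinai (metric) entropy `h_μ(T)`. -/
noncomputable def ksEntropy {Z : Type*} [MeasurableSpace Z] (T : Z → Z)
    (μ : Measure Z) : ℝ :=
  ⨆ p : {p : Z → ℕ // Measurable p},
    limsup (fun n : ℕ =>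
      partitionEntropy μ (fun z => fun i : Fin n => p.1 (T^[(i : ℕ)] z)) / n) atTop

lemma birkhoffSum'_eq {Z : Type*} (T : Z → Z) (ψ : Z → ℝ) (n : ℕ) (z : Z) :
    birkhoffSum' T ψ n z = birkhoffSum T ψ n z := rfl

lemma nat_div_tendsto (k : ℕ) (hk : 1 ≤ k) :
    Tendsto (fun n : ℕ => ((n / k : ℕ) : ℝ) / (n : ℝ)) atTop (nhds (1 / (k : ℝ))) := by
  have hk0 : (0:ℝ) < k := by exact_mod_cast hk
  apply tendsto_of_tendsto_of_tendsto_of_le_of_le'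
    (g := fun n : ℕ => 1 / (k:ℝ) - 1 / (n:ℝ)) (h := fun _ : ℕ => 1 / (k:ℝ))
  · simpa using (tendsto_one_div_atTop_nhds_zero_nat).const_sub (1 / (k:ℝ))
  · exact tendsto_const_nhds
  · filter_upwards [eventually_ge_atTop 1] with n hn
    have hn0 : (0:ℝ) < n := by exact_mod_cast hn
    have h1 : (n:ℝ) - k ≤ ((n / k : ℕ) : ℝ) * k := by
      have := Nat.div_add_mod n k
      have hmod : (n % k : ℕ) < k := Nat.mod_lt n hk
      have hcast : ((k * (n / k) : ℕ) : ℝ) + ((n % k : ℕ) : ℝ) = (n : ℝ) := by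
        exact_mod_cast congrArg (Nat.cast : ℕ → ℝ) this
      have : ((n % k : ℕ) : ℝ) ≤ k := by exact_mod_cast hmod.le
      push_cast at hcast ⊢
      nlinarith
    rw [div_sub_div _ _ (ne_of_gt hk0) (ne_of_gt hn0), div_le_div_iff₀ (by positivity) hn0]
    nlinarith
  · filter_upwards [eventually_ge_atTop 1] with n hn
    have hn0 : (0:ℝ) < n := by exact_mod_cast hn
    have h2 : ((n / k : ℕ) : ℝ) * k ≤ (n:ℝ) := by exact_mod_cast Nat.div_mul_le_self n k
    rw [div_le_div_iff₀ hn0 hk0]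
    nlinarith

lemma liminf_helper (k : ℕ) (hk : 1 ≤ k) (c D : ℝ) (w : ℕ → ℝ≥0∞)
    (hw : ∀ᶠ n : ℕ in atTop, ENNReal.ofReal (Real.exp (c + ((n / k : ℕ) : ℝ) * D)) ≤ w n) :
    ((D / (k : ℝ) : ℝ) : EReal) ≤ liminf (fun n : ℕ => ENNReal.log (w n) / (n : EReal)) atTop := by
  set v : ℕ → ℝ := fun n => (c + ((n / k : ℕ) : ℝ) * D) / (n : ℝ) with hv
  have h2 : Tendsto v atTop (nhds (D / (k:ℝ))) := by
    have hconv : Tendsto (fun n : ℕ => c / (n:ℝ) + ((n / k : ℕ) : ℝ) / (n:ℝ) * D) atTop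
        (nhds (0 + 1 / (k:ℝ) * D)) :=
      (tendsto_const_div_atTop_nhds_zero_nat c).add ((nat_div_tendsto k hk).mul_const D)
    have : (fun n : ℕ => c / (n:ℝ) + ((n / k : ℕ) : ℝ) / (n:ℝ) * D) = v := by
      funext n; simp [hv]; ring
    rw [this] at hconv
    convert hconv using 2
    ring
  have h3 : liminf (fun n : ℕ => ((v n : ℝ) : EReal)) atTop = ((D / (k:ℝ) : ℝ) : EReal) :=
    (EReal.tendsto_coe.2 h2).liminf_eq
  rw [← h3]
  refine liminf_le_liminf ?_ (by isBoundedDefault) (by isBoundedDefault)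
  filter_upwards [hw, eventually_ge_atTop 1] with n hn hn1
  have hlog : ((c + ((n / k : ℕ) : ℝ) * D : ℝ) : EReal) ≤ ENNReal.log (w n) := by
    have := ENNReal.log_monotone hn
    rwa [ENNReal.log_ofReal_of_pos (Real.exp_pos _), Real.log_exp] at this
  have hne : ((n:ℝ) : EReal) = (n : EReal) := EReal.coe_coe_eq_natCast n
  have hnn : (0 : EReal) ≤ (n : EReal) := by
    rw [← hne]; exact_mod_cast (Nat.cast_nonneg n : (0:ℝ) ≤ n)
  calc ((v n : ℝ) : EReal) = ((c + ((n / k : ℕ) : ℝ) * D : ℝ) : EReal) / (n : EReal) := by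
        rw [hv]; simp only [← hne, ← EReal.coe_div]
      _ ≤ ENNReal.log (w n) / (n : EReal) := EReal.div_le_div_right_of_nonneg hnn hlog

lemma core (i₀ i₁ : ℝ) (hI : i₀ ≤ i₁) (f : ℝ → ℝ)
    (hmaps : Set.MapsTo f (Set.Icc i₀ i₁) (Set.Icc i₀ i₁))
    (φ : ℝ → ℝ) (hφ : Continuous φ) (a : ℝ)
    (k : ℕ) (hk : 1 ≤ k)
    (a₂ : ℝ) (ha₂ : a < a₂)
    (G : Set ℝ) (hG : ∀ y ∈ G, (k : ℝ) * a₂ ≤ birkhoffSum' f φ k y)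
    (W : ℕ → Set ℝ)
    (hWmem : ∀ m, ∀ x ∈ W m, x ∈ Set.Icc i₀ i₁ ∧ ∀ j < m, f^[j * k] x ∈ G)
    (c D : ℝ)
    (hWvol : ∀ᶠ m : ℕ in atTop, ENNReal.ofReal (Real.exp (c + (m : ℝ) * D)) ≤ volume (W m)) :
    ((D / (k : ℝ) : ℝ) : EReal) ≤ liminf (fun n : ℕ =>
      ENNReal.log (volume {x : ℝ | x ∈ Set.Icc i₀ i₁ ∧
        a < birkhoffSum' f φ n x / (n : ℝ)}) / (n : EReal)) atTop := by
  have hk0 : (0:ℝ) < k := by exact_mod_cast hk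
  -- bound on φ over the interval
  obtain ⟨z, hz, hzB'⟩ := isCompact_Icc.exists_isMaxOn (f := fun y => |φ y|)
    ⟨i₀, le_refl i₀, hI⟩ (continuous_abs.comp hφ).continuousOn
  have hzB : ∀ y ∈ Set.Icc i₀ i₁, |φ y| ≤ |φ z| := fun y hy => hzB' hy
  set B : ℝ := |φ z| with hBdef
  have hB0 : 0 ≤ B := abs_nonneg _
  -- Birkhoff sum bound on W (n/k)
  have hsum1 : ∀ m x, (∀ j < m, f^[j * k] x ∈ G) →
      ((m : ℝ) * k) * a₂ ≤ birkhoffSum f φ (m * k) x := by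
    intro m
    induction m with
    | zero => intro x _; simp [birkhoffSum]
    | succ m ih =>
      intro x hx
      have h1 : birkhoffSum f φ ((m + 1) * k) x
          = birkhoffSum f φ (m * k) x + birkhoffSum f φ k (f^[m * k] x) := by
        rw [Nat.succ_mul, birkhoffSum_add]
      have h2 := ih x (fun j hj => hx j (Nat.lt_succ_of_lt hj))
      have h3 := hG _ (hx m (Nat.lt_succ_self m))
      rw [birkhoffSum'_eq] at h3
      rw [h1]; push_cast; push_cast at h2; nlinarith
  have hsum2 : ∀ (y : ℝ), y ∈ Set.Icc i₀ i₁ → ∀ r : ℕ, r ≤ k →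
      -((k : ℝ) * B) ≤ birkhoffSum f φ r y := by
    intro y hy r hr
    have : ∀ i ∈ Finset.range r, -B ≤ φ (f^[i] y) :=
      fun i _ => (abs_le.1 (hzB _ (hmaps.iterate i hy))).1
    have hsum := Finset.sum_le_sum (f := fun _ : ℕ => -B) (g := fun i => φ (f^[i] y))
      (fun i hi => this i hi)
    simp only [Finset.sum_const, Finset.card_range, nsmul_eq_mul] at hsum
    have : -((k:ℝ) * B) ≤ (r:ℝ) * (-B) := by
      have : (r:ℝ) ≤ k := by exact_mod_cast hr
      nlinarith
    calc -((k:ℝ) * B) ≤ (r:ℝ) * (-B) := this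
      _ ≤ birkhoffSum f φ r y := hsum
  -- eventual inclusion into the deviation set
  have hincl : ∀ᶠ n : ℕ in atTop, W (n / k) ⊆
      {x : ℝ | x ∈ Set.Icc i₀ i₁ ∧ a < birkhoffSum' f φ n x / (n : ℝ)} := by
    have htend : Tendsto (fun n : ℕ => ((n:ℝ) - k) * (a₂ - a)) atTop atTop := by
      apply Tendsto.atTop_mul_const (by linarith)
      exact tendsto_atTop_add_const_right _ _ tendsto_natCast_atTop_atTop
    filter_upwards [eventually_ge_atTop 1, htend.eventually_gt_atTop ((k:ℝ) * (B + |a|))]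
      with n hn1 hgt x hxW
    obtain ⟨hxI, hxG⟩ := hWmem (n / k) x hxW
    refine ⟨hxI, ?_⟩
    have hn0 : (0:ℝ) < n := by exact_mod_cast hn1
    rw [lt_div_iff₀ hn0]
    set m := n / k with hm
    have hdecomp : birkhoffSum' f φ n x
        = birkhoffSum f φ (m * k) x + birkhoffSum f φ (n % k) (f^[m * k] x) := by
      rw [birkhoffSum'_eq, ← birkhoffSum_add]
      congr 1
      rw [hm, Nat.mul_comm]
      exact (Nat.div_add_mod n k).symm
    have h1 := hsum1 m x hxG
    have h2 := hsum2 (f^[m * k] x) (hmaps.iterate (m * k) hxI) (n % k) (Nat.mod_lt n hk).le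
    have hts : ((m * k : ℕ) : ℝ) ≤ (n : ℝ) := by exact_mod_cast Nat.div_mul_le_self n k
    have htl : (n : ℝ) - ((m * k : ℕ) : ℝ) ≤ (k : ℝ) := by
      have : n - m * k < k := by
        rw [hm, Nat.mul_comm]
        have e1 := Nat.div_add_mod n k
        have hmod := Nat.mod_lt n (show 0 < k by omega)
        omega
      have h4 : ((n - m * k : ℕ) : ℝ) ≤ (k:ℝ) := by exact_mod_cast this.le
      have h5 : ((n - m * k : ℕ) : ℝ) = (n : ℝ) - ((m * k : ℕ) : ℝ) := by
        have : m * k ≤ n := by rw [hm]; exact Nat.div_mul_le_self n k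
        push_cast [this]; ring
      linarith
    set t : ℝ := ((m * k : ℕ) : ℝ) with ht
    have key1 : ((n:ℝ) - k) * (a₂ - a) ≤ t * (a₂ - a) :=
      mul_le_mul_of_nonneg_right (by linarith) (by linarith)
    have key2 : -((k:ℝ) * |a|) ≤ (t - n) * a := by
      have habs : |t - (n:ℝ)| ≤ (k:ℝ) := abs_le.2 ⟨by linarith, by linarith⟩
      calc -((k:ℝ) * |a|) ≤ -(|t - (n:ℝ)| * |a|) := by
            have := mul_le_mul_of_nonneg_right habs (abs_nonneg a); linarith
        _ = -|(t - (n:ℝ)) * a| := by rw [abs_mul]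
        _ ≤ (t - n) * a := neg_abs_le _
    have hmt : t = (m : ℝ) * (k : ℝ) := by rw [ht]; push_cast; ring
    rw [hdecomp]
    have : (n:ℝ) * a < t * a₂ - (k:ℝ) * B := by nlinarith
    rw [hmt] at this
    nlinarith [h1, h2]
  -- combine with volume bound
  have hdiv : Tendsto (fun n : ℕ => n / k) atTop atTop := by
    apply tendsto_atTop_atTop.2
    intro b
    exact ⟨b * k, fun n hn => (Nat.le_div_iff_mul_le (by omega)).2 hn⟩
  apply liminf_helper k hk c D
  filter_upwards [hincl, hdiv.eventually hWvol] with n hn hvol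
  exact le_trans hvol (measure_mono hn)

/-- Lower large deviation bound from a horseshoe. Let `f : I → I` be a `C²`
interval map, `μ` an ergodic hyperbolic invariant probability measure with
`λ_μ(f) = ∫ log|f′| dμ > 0`, `φ` continuous, `a ∈ ℝ` and `ε > 0` with `∫φ dμ − ε > a`.
Suppose there are `k, l ≥ 1` with `(log l)/k ≥ h_μ(f) − ε` and pairwise disjoint compact
intervals `L_1,…,L_l ⊆ L` with `f^k(L_i) = L`, `f^k` injective on each `L_i`, and
`|(1/k)log|(f^k)′(x)| − λ_μ(f)| ≤ ε`, `(1/k)S_kφ(x) ≥ ∫φ dμ − ε` on `⊔_i L_i`. Then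
`liminf (1/n) log m({x ∈ I : (1/n)S_nφ(x) > a}) ≥ h_μ(f) − ∫ log|f′| dμ − 2ε`. -/
theorem stmt8 (i₀ i₁ : ℝ) (hI : i₀ < i₁) (f : ℝ → ℝ) (hf : ContDiff ℝ 2 f)
    (hmaps : Set.MapsTo f (Set.Icc i₀ i₁) (Set.Icc i₀ i₁))
    (μ : Measure ℝ) [IsProbabilityMeasure μ] (herg : Ergodic f μ)
    (hμI : μ (Set.Icc i₀ i₁) = 1)
    (hhyp : 0 < ∫ x, Real.log |deriv f x| ∂μ)
    (φ : ℝ → ℝ) (hφ : Continuous φ) (a ε : ℝ) (hε : 0 < ε)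
    (ha : a < (∫ x, φ x ∂μ) - ε)
    (k l : ℕ) (hk : 1 ≤ k) (hl : 1 ≤ l)
    (hkl : ksEntropy f μ - ε ≤ Real.log l / k)
    (u v : ℝ) (huv : u ≤ v) (hLI : Set.Icc u v ⊆ Set.Icc i₀ i₁)
    (Li : Fin l → Set ℝ)
    (hint : ∀ i, ∃ ui vi : ℝ, ui ≤ vi ∧ Li i = Set.Icc ui vi)
    (hsub : ∀ i, Li i ⊆ Set.Icc u v)
    (hdisj : Pairwise (fun i j => Disjoint (Li i) (Li j)))
    (himg : ∀ i, f^[k] '' Li i = Set.Icc u v)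
    (hinj : ∀ i, Set.InjOn f^[k] (Li i))
    (hderiv : ∀ x ∈ ⋃ i, Li i,
      |Real.log |deriv f^[k] x| / k - ∫ y, Real.log |deriv f y| ∂μ| ≤ ε)
    (hbirk : ∀ x ∈ ⋃ i, Li i, (∫ y, φ y ∂μ) - ε ≤ birkhoffSum' f φ k x / k) :
    ((ksEntropy f μ - (∫ x, Real.log |deriv f x| ∂μ) - 2 * ε : ℝ) : EReal) ≤
      liminf (fun n : ℕ =>
        ENNReal.log (volume {x : ℝ | x ∈ Set.Icc i₀ i₁ ∧
          a < birkhoffSum' f φ n x / (n : ℝ)}) / (n : EReal)) atTop := by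
  have hk0 : (0:ℝ) < k := by exact_mod_cast hk
  have hl0 : (0:ℝ) < l := by exact_mod_cast hl
  set lam := ∫ x, Real.log |deriv f x| ∂μ with hlam
  set Φ := ∫ x, φ x ∂μ with hΦ
  set C := Real.exp ((k:ℝ) * (lam + ε)) with hCdef
  have hC0 : (0:ℝ) < C := Real.exp_pos _
  have hlogC : Real.log C = (k:ℝ) * (lam + ε) := Real.log_exp _
  have hfd : Differentiable ℝ f := hf.differentiable (by norm_num)
  have hgd' : ∀ n : ℕ, Differentiable ℝ (f^[n]) := by
    intro n
    induction n with
    | zero => simpa using differentiable_id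
    | succ n ih => rw [Function.iterate_succ']; exact hfd.comp ih
  have hgd : Differentiable ℝ (f^[k]) := hgd' k
  have hgc : Continuous (f^[k]) := hfd.continuous.iterate k
  -- derivative bound on the horseshoe
  have hCd : ∀ x ∈ ⋃ i, Li i, |deriv (f^[k]) x| ≤ C := by
    intro x hx
    have h := (abs_le.1 (hderiv x hx)).2
    rw [sub_le_iff_le_add, div_le_iff₀ hk0] at h
    have hlog : Real.log |deriv (f^[k]) x| ≤ (k:ℝ) * (lam + ε) := by
      calc Real.log |deriv (f^[k]) x| ≤ (ε + lam) * k := h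
        _ = (k:ℝ) * (lam + ε) := by ring
    rcases eq_or_lt_of_le (abs_nonneg (deriv (f^[k]) x)) with h0 | h0
    · rw [← h0]; exact hC0.le
    · calc |deriv (f^[k]) x| = Real.exp (Real.log |deriv (f^[k]) x|) := (Real.exp_log h0).symm
        _ ≤ C := Real.exp_le_exp.2 hlog
  -- the good Birkhoff bound on the horseshoe
  have ha₂Φ : a < Φ - ε := ha
  have hGbirk : ∀ y ∈ ⋃ i, Li i, (k:ℝ) * (Φ - ε) ≤ birkhoffSum' f φ k y := by
    intro y hy
    have h := hbirk y hy
    rw [le_div_iff₀ hk0] at h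
    linarith
  rcases eq_or_lt_of_le huv with hveq | huv'
  · -- degenerate case : u = v
    subst hveq
    have hLiu : ∀ i, Li i = {u} := by
      intro i
      obtain ⟨ui, vi, huivi, hLi⟩ := hint i
      have h1 : Li i ⊆ {u} := by
        intro y hy
        have := hsub i hy
        simp only [Set.Icc_self, Set.mem_singleton_iff] at this ⊢
        exact this
      have h2 : (Li i).Nonempty := by rw [hLi]; exact Set.nonempty_Icc.2 huivi
      exact (Set.Nonempty.subset_singleton_iff h2).1 h1
    have hl1 : l = 1 := by
      by_contra h
      have h2 : 2 ≤ l := by omega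
      have hd : Disjoint (Li ⟨0, by omega⟩) (Li ⟨1, by omega⟩) := hdisj (by simp [Fin.ext_iff])
      rw [hLiu, hLiu] at hd
      exact (Set.disjoint_left.1 hd rfl) rfl
    have hhe : ksEntropy f μ ≤ ε := by
      have h0 : Real.log (l:ℝ) = 0 := by rw [hl1]; simp
      rw [h0, zero_div] at hkl
      linarith
    have hu_mem : u ∈ ⋃ i, Li i :=
      Set.mem_iUnion.2 ⟨⟨0, by omega⟩, by rw [hLiu]; rfl⟩
    have hgu : f^[k] u = u := by
      have h1 := himg ⟨0, by omega⟩
      rw [hLiu, Set.image_singleton, Set.Icc_self] at h1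
      exact Set.singleton_eq_singleton_iff.1 h1
    have huI : u ∈ Set.Icc i₀ i₁ := hLI (Set.mem_Icc.2 ⟨le_rfl, le_rfl⟩)
    have hC1 : (1:ℝ) < C := by
      rw [hCdef, show (1:ℝ) = Real.exp 0 from Real.exp_zero.symm]
      apply Real.exp_lt_exp.2
      have : (0:ℝ) < lam := hhyp
      positivity
    have hg1 : ∀ n : ℕ, ContDiff ℝ 1 (f^[n]) := by
      intro n
      induction n with
      | zero => simpa using contDiff_id
      | succ n ih => rw [Function.iterate_succ']; exact (hf.of_le (by norm_num)).comp ih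
    have hgderiv_cont : Continuous (deriv (f^[k])) := (hg1 k).continuous_deriv le_rfl
    have hScont : Continuous (fun y => birkhoffSum' f φ k y) := by
      simp only [birkhoffSum']
      exact continuous_finset_sum _ fun i _ => hφ.comp (hfd.continuous.iterate i)
    set a₂ : ℝ := (a + (Φ - ε)) / 2 with ha₂def
    have ha₂ : a < a₂ := by rw [ha₂def]; linarith
    have ha₂' : a₂ < Φ - ε := by rw [ha₂def]; linarith
    have hSu : (k:ℝ) * a₂ < birkhoffSum' f φ k u := by
      have := hGbirk u hu_mem
      nlinarith
    have hc₁0 : (0:ℝ) < (i₁ - i₀) / 2 := by linarith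
    set c₁ : ℝ := (i₁ - i₀) / 2 with hc₁def
    have hvolW : ∀ r : ℝ, 0 < r →
        ENNReal.ofReal (min r c₁) ≤ volume (Metric.closedBall u r ∩ Set.Icc i₀ i₁) := by
      intro r hr
      have htmin0 : 0 ≤ min r c₁ := le_min hr.le hc₁0.le
      rcases le_or_gt u ((i₀ + i₁) / 2) with hu | hu
      · have hsub2 : Set.Icc u (u + min r c₁) ⊆ Metric.closedBall u r ∩ Set.Icc i₀ i₁ := by
          intro y hy
          obtain ⟨hy1, hy2⟩ := Set.mem_Icc.1 hy
          refine ⟨?_, Set.mem_Icc.2 ⟨le_trans huI.1 hy1, ?_⟩⟩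
          · rw [Metric.mem_closedBall, Real.dist_eq, abs_le]
            exact ⟨by linarith, by linarith [min_le_left r c₁]⟩
          · have := min_le_right r c₁
            rw [hc₁def] at this
            linarith
        calc ENNReal.ofReal (min r c₁) = volume (Set.Icc u (u + min r c₁)) := by
              rw [Real.volume_Icc]; congr 1; ring
          _ ≤ _ := measure_mono hsub2
      · have hsub2 : Set.Icc (u - min r c₁) u ⊆ Metric.closedBall u r ∩ Set.Icc i₀ i₁ := by
          intro y hy
          obtain ⟨hy1, hy2⟩ := Set.mem_Icc.1 hy
          refine ⟨?_, Set.mem_Icc.2 ⟨?_, le_trans hy2 huI.2⟩⟩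
          · rw [Metric.mem_closedBall, Real.dist_eq, abs_le]
            exact ⟨by linarith [min_le_left r c₁], by linarith⟩
          · have := min_le_right r c₁
            rw [hc₁def] at this
            linarith
        calc ENNReal.ofReal (min r c₁) = volume (Set.Icc (u - min r c₁) u) := by
              rw [Real.volume_Icc]; congr 1; ring
          _ ≤ _ := measure_mono hsub2
    have hmain : ∀ η : ℝ, 0 < η → ((-Real.log (C + η) / (k:ℝ) : ℝ) : EReal) ≤
        liminf (fun n : ℕ =>
          ENNReal.log (volume {x : ℝ | x ∈ Set.Icc i₀ i₁ ∧
            a < birkhoffSum' f φ n x / (n : ℝ)}) / (n : EReal)) atTop := by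
      intro η hη
      set K : ℝ := C + η with hKdef
      have hK1 : (1:ℝ) < K := by rw [hKdef]; linarith
      have hK0 : (0:ℝ) < K := by linarith
      -- find a good ball
      obtain ⟨δ, hδ0, hδprop⟩ : ∃ δ > 0, ∀ y, dist y u ≤ δ →
          ((k:ℝ) * a₂ ≤ birkhoffSum' f φ k y ∧ |deriv (f^[k]) y| ≤ K) := by
        have hopen : IsOpen {y : ℝ | (k:ℝ) * a₂ < birkhoffSum' f φ k y ∧
            |deriv (f^[k]) y| < K} :=
          (isOpen_lt continuous_const hScont).inter
            (isOpen_lt (continuous_abs.comp hgderiv_cont) continuous_const)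
        have humem : u ∈ {y : ℝ | (k:ℝ) * a₂ < birkhoffSum' f φ k y ∧
            |deriv (f^[k]) y| < K} :=
          ⟨hSu, lt_of_le_of_lt (hCd u hu_mem) (by rw [hKdef]; linarith)⟩
        obtain ⟨δ', hδ'0, hball⟩ := Metric.isOpen_iff.1 hopen u humem
        refine ⟨δ' / 2, by linarith, fun y hy => ?_⟩
        have hmem := hball (show y ∈ Metric.ball u δ' by rw [Metric.mem_ball]; linarith)
        exact ⟨hmem.1.le, hmem.2.le⟩
      have hlipK : LipschitzOnWith K.toNNReal (f^[k]) (Metric.closedBall u δ) := by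
        apply Convex.lipschitzOnWith_of_nnnorm_deriv_le (fun x _ => hgd.differentiableAt) ?_
          (convex_closedBall u δ)
        intro x hx
        rw [← NNReal.coe_le_coe, coe_nnnorm, Real.norm_eq_abs, Real.coe_toNNReal _ hK0.le]
        exact (hδprop x (Metric.mem_closedBall.1 hx)).2
      set W : ℕ → Set ℝ := fun m => Metric.closedBall u (δ / K ^ m) ∩ Set.Icc i₀ i₁ with hWdef
      have hWit : ∀ m x, x ∈ W m → ∀ j, j ≤ m →
          f^[j * k] x ∈ Metric.closedBall u (δ / K ^ (m - j)) ∩ Set.Icc i₀ i₁ := by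
        intro m x hx j
        induction j with
        | zero => intro _; simpa [hWdef] using hx
        | succ j ih =>
          intro hj
          have hjm : j ≤ m := by omega
          obtain ⟨hy1, hy2⟩ := ih hjm
          have hyd : dist (f^[j * k] x) u ≤ δ / K ^ (m - j) := Metric.mem_closedBall.1 hy1
          have hpow1 : (1:ℝ) ≤ K ^ (m - j) := one_le_pow₀ hK1.le
          have hyδ : f^[j * k] x ∈ Metric.closedBall u δ := by
            rw [Metric.mem_closedBall]
            have h6 : δ / K ^ (m - j) ≤ δ := by
              apply div_le_self hδ0.le hpow1
            linarith
          have hd2 : dist (f^[k] (f^[j * k] x)) u ≤ K * (δ / K ^ (m - j)) := by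
            have h7 := hlipK.dist_le_mul _ hyδ u (Metric.mem_closedBall_self hδ0.le)
            rw [hgu] at h7
            calc dist (f^[k] (f^[j * k] x)) u ≤ (K.toNNReal : ℝ) * dist (f^[j * k] x) u := h7
              _ ≤ K * (δ / K ^ (m - j)) := by
                  rw [Real.coe_toNNReal _ hK0.le]
                  exact mul_le_mul_of_nonneg_left hyd hK0.le
          have hiter : f^[(j + 1) * k] x = f^[k] (f^[j * k] x) := by
            rw [show (j + 1) * k = k + j * k by ring, Function.iterate_add_apply]
          constructor
          · rw [Metric.mem_closedBall, hiter]
            have hksub : m - j = (m - (j + 1)) + 1 := by omega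
            have h8 : K * (δ / K ^ (m - j)) = δ / K ^ (m - (j + 1)) := by
              rw [hksub, pow_succ]
              field_simp
            linarith [hd2, le_of_eq h8]
          · rw [hiter]
            exact (hmaps.iterate k) hy2
      set D : ℝ := -Real.log K with hDdef
      have htend0 : Tendsto (fun m : ℕ => δ / K ^ m) atTop (nhds 0) := by
        have h9 : ∀ m : ℕ, δ / K ^ m = δ * (K⁻¹) ^ m := by
          intro m; rw [inv_pow, div_eq_mul_inv]
        simp only [h9]
        have := tendsto_pow_atTop_nhds_zero_of_lt_one (by positivity : (0:ℝ) ≤ K⁻¹)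
          (by rw [inv_lt_one_iff₀]; right; exact hK1)
        simpa using this.const_mul δ
      have hWvol : ∀ᶠ m : ℕ in atTop,
          ENNReal.ofReal (Real.exp (Real.log δ + (m:ℝ) * D)) ≤ volume (W m) := by
        filter_upwards [htend0.eventually (gt_mem_nhds hc₁0)] with m hm
        have hKm : Real.exp (Real.log δ + (m:ℝ) * D) = δ / K ^ m := by
          rw [hDdef, Real.exp_add, Real.exp_log hδ0, mul_neg, Real.exp_neg,
            Real.exp_nat_mul, Real.exp_log hK0, div_eq_mul_inv]
        rw [hKm]
        have h10 := hvolW (δ / K ^ m) (by positivity)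
        rw [min_eq_left hm.le] at h10
        exact h10
      have hcore := core i₀ i₁ hI.le f hmaps φ hφ a k hk a₂ ha₂ (Metric.closedBall u δ)
        (fun y hy => (hδprop y (Metric.mem_closedBall.1 hy)).1) W
        (fun m x hx => ⟨hx.2, fun j hj => by
          obtain ⟨h11, _⟩ := hWit m x hx j hj.le
          have hpow1 : (1:ℝ) ≤ K ^ (m - j) := one_le_pow₀ hK1.le
          rw [Metric.mem_closedBall] at h11 ⊢
          have h12 : δ / K ^ (m - j) ≤ δ := div_le_self hδ0.le hpow1
          linarith⟩) (Real.log δ) D hWvol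
      rw [hDdef] at hcore
      exact hcore
    have hfinal : ((-(lam + ε) : ℝ) : EReal) ≤ liminf (fun n : ℕ =>
        ENNReal.log (volume {x : ℝ | x ∈ Set.Icc i₀ i₁ ∧
          a < birkhoffSum' f φ n x / (n : ℝ)}) / (n : EReal)) atTop := by
      by_contra hcon
      rw [not_le] at hcon
      obtain ⟨b, hb1, hb2⟩ := EReal.exists_between_coe_real hcon
      rw [EReal.coe_lt_coe_iff] at hb2
      have hCexp : C < Real.exp (-b * k) := by
        rw [hCdef]
        apply Real.exp_lt_exp.2
        nlinarith
      set η := Real.exp (-b * k) - C with hηdef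
      have hη0 : 0 < η := by linarith
      have h12 := hmain η hη0
      have h13 : -Real.log (C + η) / (k:ℝ) = b := by
        rw [hηdef, show C + (Real.exp (-b * k) - C) = Real.exp (-b * k) by ring,
          Real.log_exp]
        field_simp
      rw [h13] at h12
      exact absurd (lt_of_le_of_lt h12 hb1) (lt_irrefl _)
    refine le_trans ?_ hfinal
    rw [EReal.coe_le_coe_iff]
    linarith
  · -- main case : u < v
    have hLiclosed : ∀ i, IsClosed (Li i) := by
      intro i; obtain ⟨ui, vi, _, h⟩ := hint i; rw [h]; exact isClosed_Icc
    have hlip : ∀ i, LipschitzOnWith C.toNNReal (f^[k]) (Li i) := by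
      intro i
      obtain ⟨ui, vi, hui, hLi⟩ := hint i
      rw [hLi]
      apply Convex.lipschitzOnWith_of_nnnorm_deriv_le (fun x _ => hgd.differentiableAt) ?_
        (convex_Icc ui vi)
      intro x hx
      rw [← NNReal.coe_le_coe, coe_nnnorm, Real.norm_eq_abs, Real.coe_toNNReal _ hC0.le]
      exact hCd x (Set.mem_iUnion.2 ⟨i, by rw [hLi]; exact hx⟩)
    have himgle : ∀ i, ∀ S : Set ℝ, S ⊆ Li i →
        volume (f^[k] '' S) ≤ ENNReal.ofReal C * volume S := by
      intro i S hS
      have h2 := ((hlip i).mono hS).hausdorffMeasure_image_le (d := 1) zero_le_one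
      rw [MeasureTheory.hausdorffMeasure_real] at h2
      simpa [ENNReal.rpow_one, ENNReal.ofReal] using h2
    -- the nested horseshoe sets
    let A : ℕ → Set ℝ := fun m =>
      Nat.rec (Set.Icc u v) (fun _ Am => ⋃ i, Li i ∩ f^[k] ⁻¹' Am) m
    have hA0 : A 0 = Set.Icc u v := rfl
    have hAsucc : ∀ m, A (m + 1) = ⋃ i, Li i ∩ f^[k] ⁻¹' (A m) := fun m => rfl
    have hAclosed : ∀ m, IsClosed (A m) := by
      intro m
      induction m with
      | zero => exact isClosed_Icc
      | succ m ih =>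
        rw [hAsucc]
        exact isClosed_iUnion_of_finite fun i => (hLiclosed i).inter (ih.preimage hgc)
    have hAsub : ∀ m, A m ⊆ Set.Icc u v := by
      intro m
      cases m with
      | zero => exact le_refl _
      | succ m =>
        rw [hAsucc]
        exact Set.iUnion_subset fun i => (Set.inter_subset_left).trans (hsub i)
    set c : ℝ := Real.log (v - u) with hc
    set D : ℝ := Real.log l - Real.log C with hD
    have hexpD : Real.exp D = (l:ℝ) / C := by
      rw [hD, Real.exp_sub, Real.exp_log hl0, Real.exp_log hC0]
    have hrec : ∀ m : ℕ, ENNReal.ofReal (Real.exp (c + (m:ℝ) * D)) ≤ volume (A m) := by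
      intro m
      induction m with
      | zero =>
        rw [hA0, Real.volume_Icc]
        simp only [Nat.cast_zero, zero_mul, add_zero]
        rw [hc, Real.exp_log (by linarith)]
      | succ m ih =>
        have hterm : ∀ i, volume (A m) / ENNReal.ofReal C ≤ volume (Li i ∩ f^[k] ⁻¹' (A m)) := by
          intro i
          have himgS : f^[k] '' (Li i ∩ f^[k] ⁻¹' (A m)) = A m := by
            apply Set.Subset.antisymm
            · rintro y ⟨x, ⟨_, hx2⟩, rfl⟩; exact hx2
            · intro y hy
              have h3 : y ∈ Set.Icc u v := hAsub m hy
              rw [← himg i] at h3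
              obtain ⟨x, hx, rfl⟩ := h3
              exact ⟨x, ⟨hx, hy⟩, rfl⟩
          have h4 := himgle i _ (Set.inter_subset_left (t := f^[k] ⁻¹' (A m)))
          rw [himgS] at h4
          rw [ENNReal.div_le_iff_le_mul (Or.inl (by simp [hC0.le]; exact hC0))
            (Or.inl ENNReal.ofReal_ne_top)]
          rwa [mul_comm] at h4
        have hvol_eq : volume (A (m+1)) = ∑ i, volume (Li i ∩ f^[k] ⁻¹' (A m)) := by
          rw [hAsucc, measure_iUnion ?_ fun i =>
            ((hLiclosed i).inter ((hAclosed m).preimage hgc)).measurableSet]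
          · exact tsum_fintype _
          · intro i j hij
            exact (hdisj hij).mono Set.inter_subset_left Set.inter_subset_left
        calc ENNReal.ofReal (Real.exp (c + ((m+1 : ℕ):ℝ) * D))
            = ENNReal.ofReal ((l:ℝ) * (Real.exp (c + (m:ℝ) * D) / C)) := by
              congr 1
              rw [show c + ((m+1 : ℕ):ℝ) * D = (c + (m:ℝ) * D) + D by push_cast; ring,
                Real.exp_add, hexpD]
              ring
          _ = (l : ℝ≥0∞) * (ENNReal.ofReal (Real.exp (c + (m:ℝ) * D)) / ENNReal.ofReal C) := by
              rw [ENNReal.ofReal_mul hl0.le, ENNReal.ofReal_div_of_pos hC0,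
                ENNReal.ofReal_natCast]
          _ ≤ (l : ℝ≥0∞) * (volume (A m) / ENNReal.ofReal C) := by
              gcongr
          _ = ∑ _i : Fin l, volume (A m) / ENNReal.ofReal C := by
              rw [Finset.sum_const, Finset.card_univ, Fintype.card_fin, nsmul_eq_mul]
          _ ≤ ∑ i, volume (Li i ∩ f^[k] ⁻¹' (A m)) := Finset.sum_le_sum fun i _ => hterm i
          _ = volume (A (m+1)) := hvol_eq.symm
    have hAmem : ∀ m, ∀ x ∈ A m, x ∈ Set.Icc u v ∧ ∀ j < m, f^[j * k] x ∈ ⋃ i, Li i := by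
      intro m
      induction m with
      | zero => exact fun x hx => ⟨hx, fun j hj => absurd hj (Nat.not_lt_zero j)⟩
      | succ m ih =>
        intro x hx
        rw [hAsucc] at hx
        obtain ⟨i, hxi, hxg⟩ := Set.mem_iUnion.1 hx
        refine ⟨hsub i hxi, ?_⟩
        intro j hj
        cases j with
        | zero => simpa using Set.mem_iUnion.2 ⟨i, hxi⟩
        | succ j' =>
          rw [show (j' + 1) * k = j' * k + k by ring, Function.iterate_add_apply]
          exact (ih _ hxg).2 j' (by omega)
    have hcore := core i₀ i₁ hI.le f hmaps φ hφ a k hk (Φ - ε) ha₂Φ (⋃ i, Li i) hGbirk A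
      (fun m x hx => ⟨hLI ((hAmem m x hx).1), (hAmem m x hx).2⟩) c D
      (Eventually.of_forall hrec)
    refine le_trans ?_ hcore
    rw [EReal.coe_le_coe_iff]
    rw [hD, hlogC, sub_div]
    have h5 : (k:ℝ) * (lam + ε) / k = lam + ε := by field_simp
    rw [h5]
    linarith [hkl]
end

section
/- Let L_1,…,L_l be pairwise disjoint compact subintervals of a compact interval L ⊂ I and f : I → I a C² map with f^k(L_i) = L and f^k|_{L_i} injective for each i, and suppose |(f^k)′(x)| ≤ e^{k(Λ+ε)} for all x ∈ ⊔_i L_i. Then for every n ≥ 1, the set B_n := ∩_{j=0}^{n−1} f^{−jk}(⊔_{i=1}^l L_i) satisfies m(B_n) ≥ l^n e^{−nk(Λ+ε)} m(L), where m is Lebesgue measure. -/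
/-!
If `g` maps a piece `A` onto `S` with `|g'| ≤ C` on `A`, then `m(S) ≤ C m(A)` (the area
inequality `m(g(A)) ≤ ∫_A |g'|`). Applied to `A = L_i ∩ g⁻¹(S)` for `g = f^k` and summed over
the disjoint `L_i`, this shows that pulling a subset `S ⊆ L` back into `⊔ L_i` multiplies its
measure by at least `l / C`. Since `B_{n+1} = ⊔ L_i ∩ g⁻¹(B_n)`, induction from `B_0 ∩ L = L`
gives `m(B_n) ≥ (l / C)^n m(L)` with `C = e^{k(Λ+ε)}`.
-/

open MeasureTheory

theorem volume_image_le_of_abs_deriv_le {g g' : ℝ → ℝ} {s : Set ℝ} {C : ℝ}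
    (hs : MeasurableSet s) (hg : ∀ x ∈ s, HasDerivWithinAt g (g' x) s x)
    (hC : ∀ x ∈ s, |g' x| ≤ C) :
    volume (g '' s) ≤ ENNReal.ofReal C * volume s :=
  calc volume (g '' s)
      ≤ ∫⁻ x in s, ENNReal.ofReal |(ContinuousLinearMap.toSpanSingleton ℝ (g' x)).det| :=
        addHaar_image_le_lintegral_abs_det_fderiv volume hs fun x hx => (hg x hx).hasFDerivWithinAt
    _ ≤ ∫⁻ _ in s, ENNReal.ofReal C := by
        refine setLIntegral_mono' hs fun x hx => ENNReal.ofReal_le_ofReal ?_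
        rw [ContinuousLinearMap.det_toSpanSingleton]
        exact hC x hx
    _ = ENNReal.ofReal C * volume s := setLIntegral_const s _

theorem volume_le_mul_volume_inter_preimage {g : ℝ → ℝ} {s S : Set ℝ} {C : ℝ}
    (hg : Differentiable ℝ g) (hs : MeasurableSet s) (hS : MeasurableSet S)
    (hSs : S ⊆ g '' s) (hC : ∀ x ∈ s, |deriv g x| ≤ C) :
    volume S ≤ ENNReal.ofReal C * volume (s ∩ g ⁻¹' S) := by
  have hSimage : g '' (s ∩ g ⁻¹' S) = S := by
    rw [Set.image_inter_preimage, Set.inter_eq_self_of_subset_right hSs]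
  calc volume S = volume (g '' (s ∩ g ⁻¹' S)) := by rw [hSimage]
    _ ≤ _ := volume_image_le_of_abs_deriv_le (hs.inter (hg.continuous.measurable hS))
        (fun x _ => (hg x).hasDerivAt.hasDerivWithinAt) fun x hx => hC x hx.1

theorem card_mul_volume_le_mul_volume_iUnion_inter_preimage {ι : Type*} [Fintype ι]
    {g : ℝ → ℝ} {s : ι → Set ℝ} {S : Set ℝ} {C : ℝ}
    (hg : Differentiable ℝ g) (hs : ∀ i, MeasurableSet (s i))
    (hdisj : Pairwise (fun i j => Disjoint (s i) (s j))) (hS : MeasurableSet S)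
    (hSs : ∀ i, S ⊆ g '' s i) (hC : ∀ x ∈ ⋃ i, s i, |deriv g x| ≤ C) :
    Fintype.card ι * volume S ≤ ENNReal.ofReal C * volume ((⋃ i, s i) ∩ g ⁻¹' S) := by
  have hpieces : ∀ i, MeasurableSet (s i ∩ g ⁻¹' S) :=
    fun i => (hs i).inter (hg.continuous.measurable hS)
  rw [Set.iUnion_inter, measure_iUnion
    (fun i j hij => (hdisj hij).mono Set.inter_subset_left Set.inter_subset_left) hpieces,
    tsum_fintype, Finset.mul_sum, ← nsmul_eq_mul, ← Finset.card_univ, ← Finset.sum_const]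
  exact Finset.sum_le_sum fun i _ => volume_le_mul_volume_inter_preimage hg (hs i) hS (hSs i)
    fun x hx => hC x (Set.mem_iUnion_of_mem i hx)

theorem Function.biInter_range_succ_preimage_iterate {α : Type*} (g : α → α) (U : Set α)
    (m : ℕ) :
    ⋂ j ∈ Finset.range (m + 1), g^[j] ⁻¹' U =
      U ∩ g ⁻¹' ⋂ j ∈ Finset.range m, g^[j] ⁻¹' U := by
  ext x
  simp only [Set.mem_iInter, Finset.mem_range, Set.mem_inter_iff, Set.mem_preimage,
    Nat.forall_lt_succ_left, Function.iterate_zero_apply, Function.iterate_succ_apply]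

theorem card_pow_mul_volume_le_mul_volume_inter_biInter_preimage_iterate {ι : Type*} [Fintype ι]
    {g : ℝ → ℝ} {s : ι → Set ℝ} {T : Set ℝ} {C : ℝ}
    (hg : Differentiable ℝ g) (hs : ∀ i, MeasurableSet (s i))
    (hdisj : Pairwise (fun i j => Disjoint (s i) (s j))) (hT : MeasurableSet T)
    (hsT : ⋃ i, s i ⊆ T) (hTs : ∀ i, T ⊆ g '' s i)
    (hC : ∀ x ∈ ⋃ i, s i, |deriv g x| ≤ C) (m : ℕ) :
    Fintype.card ι ^ m * volume T ≤
      ENNReal.ofReal C ^ m * volume (T ∩ ⋂ j ∈ Finset.range m, g^[j] ⁻¹' ⋃ i, s i) := by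
  set U := ⋃ i, s i
  induction m with
  | zero => simp
  | succ m ih =>
    set B := ⋂ j ∈ Finset.range m, g^[j] ⁻¹' U
    have hB : MeasurableSet B := MeasurableSet.biInter (Finset.range m).countable_toSet
      fun j _ => (MeasurableSet.iUnion hs).preimage (hg.continuous.iterate j).measurable
    have hstep := card_mul_volume_le_mul_volume_iUnion_inter_preimage hg hs hdisj (hT.inter hB)
      (fun i => Set.inter_subset_left.trans (hTs i)) hC
    have hsub : U ∩ g ⁻¹' (T ∩ B) ⊆ T ∩ (U ∩ g ⁻¹' B) :=
      fun x hx => ⟨hsT hx.1, hx.1, hx.2.2⟩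
    calc (Fintype.card ι : ENNReal) ^ (m + 1) * volume T
        = Fintype.card ι * (Fintype.card ι ^ m * volume T) := by ring
      _ ≤ Fintype.card ι * (ENNReal.ofReal C ^ m * volume (T ∩ B)) := by gcongr
      _ = ENNReal.ofReal C ^ m * (Fintype.card ι * volume (T ∩ B)) := by ring
      _ ≤ ENNReal.ofReal C ^ m * (ENNReal.ofReal C * volume (U ∩ g ⁻¹' (T ∩ B))) := by
        gcongr
      _ ≤ ENNReal.ofReal C ^ (m + 1) * volume (T ∩ (U ∩ g ⁻¹' B)) := by
        rw [pow_succ, mul_assoc]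
        gcongr
      _ = _ := by rw [Function.biInter_range_succ_preimage_iterate]

theorem stmt9_general (f : ℝ → ℝ) (hf : ContDiff ℝ 2 f)
    (k : ℕ) (l : ℕ)
    (u v : ℝ)
    (Li : Fin l → Set ℝ)
    (hint : ∀ i, ∃ ui vi : ℝ, ui ≤ vi ∧ Li i = Set.Icc ui vi)
    (hsub : ∀ i, Li i ⊆ Set.Icc u v)
    (hdisj : Pairwise (fun i j => Disjoint (Li i) (Li j)))
    (himg : ∀ i, f^[k] '' Li i = Set.Icc u v)
    (Λ ε : ℝ)
    (hderiv : ∀ x ∈ ⋃ i, Li i, |deriv f^[k] x| ≤ Real.exp ((k : ℝ) * (Λ + ε))) :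
    ∀ n : ℕ, 1 ≤ n →
      ENNReal.ofReal ((l : ℝ) ^ n * Real.exp (-((n : ℝ) * k) * (Λ + ε)) *
          (volume (Set.Icc u v)).toReal) ≤
        volume (⋂ j ∈ Finset.range n, f^[j * k] ⁻¹' (⋃ i, Li i)) := by
  intro n _
  have hLi : ∀ i, MeasurableSet (Li i) := fun i => by
    obtain ⟨_, _, -, h⟩ := hint i
    exact h ▸ measurableSet_Icc
  have key := card_pow_mul_volume_le_mul_volume_inter_biInter_preimage_iterate
    ((hf.differentiable (by norm_num)).iterate k) hLi hdisj measurableSet_Icc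
    (Set.iUnion_subset hsub) (fun i => (himg i).ge) hderiv n
  rw [Fintype.card_fin] at key
  simp_rw [mul_comm _ k, Function.iterate_mul]
  set C := Real.exp ((k : ℝ) * (Λ + ε))
  have hC : ENNReal.ofReal C ^ n ≠ 0 := pow_ne_zero _ (ENNReal.ofReal_pos.2 (Real.exp_pos _)).ne'
  have hlhs : ENNReal.ofReal ((l : ℝ) ^ n * Real.exp (-((n : ℝ) * k) * (Λ + ε)) *
      (volume (Set.Icc u v)).toReal) =
        (ENNReal.ofReal C ^ n)⁻¹ * (l ^ n * volume (Set.Icc u v)) := by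
    have hexp : Real.exp (-((n : ℝ) * k) * (Λ + ε)) = (C ^ n)⁻¹ := by
      rw [← Real.exp_nat_mul, ← Real.exp_neg]
      ring_nf
    rw [hexp, ENNReal.ofReal_mul (by positivity), ENNReal.ofReal_mul (by positivity),
      ENNReal.ofReal_inv_of_pos (by positivity), ENNReal.ofReal_pow (Real.exp_pos _).le,
      ENNReal.ofReal_toReal measure_Icc_lt_top.ne, ENNReal.ofReal_pow (Nat.cast_nonneg l),
      ENNReal.ofReal_natCast]
    ring
  rw [hlhs, ENNReal.inv_mul_le_iff hC (ENNReal.pow_ne_top ENNReal.ofReal_ne_top)]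
  exact key.trans (mul_le_mul_right (measure_mono Set.inter_subset_right) _)

/-- Horseshoe measure estimate. If `L_1,…,L_l` are pairwise disjoint compact
subintervals of the compact interval `L = [u,v] ⊆ I`, `f^k(L_i) = L` with `f^k` injective
on each `L_i`, and `|(f^k)′| ≤ e^{k(Λ+ε)}` on `⊔_i L_i`, then
`B_n = ∩_{j=0}^{n−1} f^{−jk}(⊔_i L_i)` satisfies `m(B_n) ≥ l^n e^{−nk(Λ+ε)} m(L)`. -/
theorem stmt9 (f : ℝ → ℝ) (hf : ContDiff ℝ 2 f)
    (k : ℕ) (hk : 1 ≤ k) (l : ℕ) (hl : 1 ≤ l)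
    (u v : ℝ) (huv : u ≤ v)
    (Li : Fin l → Set ℝ)
    (hint : ∀ i, ∃ ui vi : ℝ, ui ≤ vi ∧ Li i = Set.Icc ui vi)
    (hsub : ∀ i, Li i ⊆ Set.Icc u v)
    (hdisj : Pairwise (fun i j => Disjoint (Li i) (Li j)))
    (himg : ∀ i, f^[k] '' Li i = Set.Icc u v)
    (hinj : ∀ i, Set.InjOn f^[k] (Li i))
    (Λ ε : ℝ)
    (hderiv : ∀ x ∈ ⋃ i, Li i, |deriv f^[k] x| ≤ Real.exp ((k : ℝ) * (Λ + ε))) :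
    ∀ n : ℕ, 1 ≤ n →
      ENNReal.ofReal ((l : ℝ) ^ n * Real.exp (-((n : ℝ) * k) * (Λ + ε)) *
          (volume (Set.Icc u v)).toReal) ≤
        volume (⋂ j ∈ Finset.range n, f^[j * k] ⁻¹' (⋃ i, Li i)) :=
  stmt9_general f hf k l u v Li hint hsub hdisj himg Λ ε hderiv
end
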